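/- arXiv:0705.2091 — 2 statements merged into one kernel-verified Lean document; each statement's English description precedes it below -/
import Mathlib

section
/- Let F² be a surface given in isothermal coordinates on open U ⊆ ℝ² with conformal factor A > 0, second fundamental form coefficients b₁₁, b₁₂, b₂₂ (all smooth), satisfying the Gauss equation b₁₁b₂₂ − b₁₂² = −(A/2)Δ log A and the Codazzi equations ∂₂b₁₁ − ∂₁b₁₂ = (b₁₁+b₂₂)∂₂B, ∂₁b₂₂ − ∂₂b₁₂ = (b₁₁+b₂₂)∂₁B where B = (1/2) log A. If the surface is minimal (b₁₁ + b₂₂ = 0) and the second fundamental form is harmonic (i.e., system (6) holds: Δᵉbᵢⱼ − 2bᵢⱼΔB + (lower order terms involving u = b₁₁+b₂₂) = 0 for all i,j), then the Gaussian curvature K = −(1/(2A))Δ log A vanishes identically on U. -/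
/-- Partial derivative in coordinate direction `i` on `ℝ²`. -/
noncomputable def pd (i : Fin 2) (f : ℝ × ℝ → ℝ) (x : ℝ × ℝ) : ℝ :=
  fderiv ℝ f x (if i = 0 then (1, 0) else (0, 1))

/-- The flat Laplacian `Δf = ∂₁₁f + ∂₂₂f` on `ℝ²`. -/
noncomputable def lap (f : ℝ × ℝ → ℝ) (x : ℝ × ℝ) : ℝ :=
  pd 0 (pd 0 f) x + pd 1 (pd 1 f) x

lemma pd_congr {f g : ℝ × ℝ → ℝ} {x : ℝ × ℝ} (h : f =ᶠ[nhds x] g) (i : Fin 2) :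
    pd i f x = pd i g x := by
  unfold pd; rw [h.fderiv_eq]

lemma pd_contDiffAt {f : ℝ × ℝ → ℝ} {x : ℝ × ℝ} (hf : ContDiffAt ℝ (⊤ : ℕ∞) f x) (i : Fin 2) :
    ContDiffAt ℝ (⊤ : ℕ∞) (pd i f) x := by
  have h1 : ContDiffAt ℝ (⊤ : ℕ∞) (fderiv ℝ f) x :=
    hf.fderiv_right (m := ((⊤ : ℕ∞) : WithTop ℕ∞)) (by exact_mod_cast le_top)
  exact (ContinuousLinearMap.apply ℝ ℝ
    (if i = 0 then ((1:ℝ), (0:ℝ)) else (0, 1))).contDiff.contDiffAt.comp x h1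

lemma pd_swap {f : ℝ × ℝ → ℝ} {x : ℝ × ℝ} (hf : ContDiffAt ℝ (⊤ : ℕ∞) f x) (i j : Fin 2) :
    pd i (pd j f) x = pd j (pd i f) x := by
  have hsymm := hf.isSymmSndFDerivAt (by rw [minSmoothness_of_isRCLikeNormedField]; exact WithTop.coe_le_coe.mpr le_top)
  have hd : DifferentiableAt ℝ (fderiv ℝ f) x :=
    (hf.fderiv_right (m := 1) (WithTop.coe_le_coe.mpr le_top)).differentiableAt (by simp)
  have key : ∀ v w : ℝ × ℝ, fderiv ℝ (fun y => fderiv ℝ f y w) x v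
      = fderiv ℝ (fderiv ℝ f) x v w := by
    intro v w
    have h2 : (fun y => fderiv ℝ f y w)
        = (ContinuousLinearMap.apply ℝ ℝ w) ∘ (fderiv ℝ f) := rfl
    rw [h2, fderiv_comp x ((ContinuousLinearMap.apply ℝ ℝ w).differentiableAt) hd]
    simp
  unfold pd
  rw [key, key, hsymm]

lemma pd_const_mul {f : ℝ × ℝ → ℝ} {x : ℝ × ℝ} (hf : DifferentiableAt ℝ f x) (c : ℝ)
    (i : Fin 2) : pd i (fun y => c * f y) x = c * pd i f x := by
  unfold pd; rw [fderiv_const_mul hf]; simp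

lemma pd_neg (f : ℝ × ℝ → ℝ) (x : ℝ × ℝ) (i : Fin 2) :
    pd i (fun y => -f y) x = -pd i f x := by
  unfold pd; rw [fderiv_fun_neg]; simp

lemma pd_zero (x : ℝ × ℝ) (i : Fin 2) : pd i (fun _ => (0:ℝ)) x = 0 := by
  unfold pd; simp


/-- Theorem 1 (curvature part): a minimal surface with harmonic second fundamental
form has vanishing Gaussian curvature `K = −(1/(2A))Δ log A`. Here `U` is an open
isothermal coordinate domain with conformal factor `A`, `B = (1/2) log A`,
`u = b₁₁ + b₂₂`, and system (6) expresses `Δb = 0`. -/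
theorem minimal_harmonic_flat (U : Set (ℝ × ℝ)) (hU : IsOpen U)
    (b11 b12 b22 A B u : ℝ × ℝ → ℝ)
    (hb11 : ContDiffOn ℝ (⊤ : ℕ∞) b11 U) (hb12 : ContDiffOn ℝ (⊤ : ℕ∞) b12 U)
    (hb22 : ContDiffOn ℝ (⊤ : ℕ∞) b22 U) (hA : ContDiffOn ℝ (⊤ : ℕ∞) A U)
    (hApos : ∀ x ∈ U, 0 < A x)
    (hB : B = fun x => (1 / 2) * Real.log (A x))
    (hu : u = fun x => b11 x + b22 x)
    (hGauss : ∀ x ∈ U,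
      b11 x * b22 x - (b12 x) ^ 2 = -(A x / 2) * lap (fun y => Real.log (A y)) x)
    (hcod1 : ∀ x ∈ U, pd 1 b11 x - pd 0 b12 x = u x * pd 1 B x)
    (hcod2 : ∀ x ∈ U, pd 0 b22 x - pd 1 b12 x = u x * pd 0 B x)
    (hmin : ∀ x ∈ U, b11 x + b22 x = 0)
    (hharm1 : ∀ x ∈ U, lap b11 x - 2 * b11 x * lap B x - 4 * pd 0 B x * pd 0 u x
      + 2 * u x * (3 * (pd 0 B x) ^ 2 - (pd 1 B x) ^ 2) = 0)
    (hharm2 : ∀ x ∈ U, lap b12 x - 2 * b12 x * lap B x - 2 * pd 0 B x * pd 1 u x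
      - 2 * pd 1 B x * pd 0 u x + 8 * u x * pd 0 B x * pd 1 B x = 0)
    (hharm3 : ∀ x ∈ U, lap b22 x - 2 * b22 x * lap B x - 4 * pd 1 B x * pd 1 u x
      + 2 * u x * (3 * (pd 1 B x) ^ 2 - (pd 0 B x) ^ 2) = 0) :
    ∀ x ∈ U, -(1 / (2 * A x)) * lap (fun y => Real.log (A y)) x = 0 := by
  intro x hx
  have hxU : U ∈ nhds x := hU.mem_nhds hx
  have sm : ∀ {f : ℝ × ℝ → ℝ}, ContDiffOn ℝ (⊤ : ℕ∞) f U → ∀ y ∈ U, ContDiffAt ℝ (⊤ : ℕ∞) f y :=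
    fun hf y hy => (hf y hy).contDiffAt (hU.mem_nhds hy)
  have hu0 : ∀ y ∈ U, u y = 0 := by intro y hy; rw [hu]; exact hmin y hy
  have pdu : ∀ i, pd i u x = 0 := fun i => by
    rw [pd_congr (Filter.eventuallyEq_of_mem hxU hu0) i, pd_zero]
  have hb22eq : ∀ y ∈ U, b22 =ᶠ[nhds y] fun z => -b11 z := fun y hy =>
    Filter.eventuallyEq_of_mem (hU.mem_nhds hy) (fun z hz => by
      have := hmin z hz; show b22 z = -b11 z; linarith)
  -- first-order Codazzi relations with u = 0
  have h1 : ∀ y ∈ U, pd 1 b11 y = pd 0 b12 y := by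
    intro y hy
    have hc := hcod1 y hy
    rw [hu0 y hy] at hc; linarith
  have h2 : ∀ y ∈ U, pd 0 b11 y = -pd 1 b12 y := by
    intro y hy
    have hc := hcod2 y hy
    have e : pd 0 b22 y = -pd 0 b11 y := by
      rw [pd_congr (hb22eq y hy) 0, pd_neg]
    rw [e, hu0 y hy] at hc; linarith
  -- b11 and b12 are (flat-)harmonic on U
  have lap11 : lap b11 x = 0 := by
    unfold lap
    rw [pd_congr (Filter.eventuallyEq_of_mem hxU (fun y hy => h2 y hy)) 0,
        pd_congr (Filter.eventuallyEq_of_mem hxU (fun y hy => h1 y hy)) 1,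
        pd_neg]
    have := pd_swap (sm hb12 x hx) 0 1
    linarith
  have lap12 : lap b12 x = 0 := by
    unfold lap
    have e1 : ∀ y ∈ U, pd 0 b12 y = pd 1 b11 y := fun y hy => (h1 y hy).symm
    have e2 : ∀ y ∈ U, pd 1 b12 y = -pd 0 b11 y := fun y hy => by
      have := h2 y hy; linarith
    rw [pd_congr (Filter.eventuallyEq_of_mem hxU e1) 0,
        pd_congr (Filter.eventuallyEq_of_mem hxU e2) 1,
        pd_neg]
    have := pd_swap (sm hb11 x hx) 0 1
    linarith
  -- lap B = (1/2) lap (log A) on U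
  set g : ℝ × ℝ → ℝ := fun y => Real.log (A y) with hgdef
  have hg : ∀ y ∈ U, ContDiffAt ℝ (⊤ : ℕ∞) g y := fun y hy =>
    (sm hA y hy).log (ne_of_gt (hApos y hy))
  have hBg : ∀ i : Fin 2, ∀ y ∈ U, pd i B y = (1/2) * pd i g y := by
    intro i y hy
    rw [hB]
    exact pd_const_mul ((hg y hy).differentiableAt (by simp)) (1/2) i
  have lapBeq : lap B x = (1/2) * lap g x := by
    unfold lap
    rw [pd_congr (Filter.eventuallyEq_of_mem hxU (fun y hy => hBg 0 y hy)) 0,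
        pd_congr (Filter.eventuallyEq_of_mem hxU (fun y hy => hBg 1 y hy)) 1,
        pd_const_mul ((pd_contDiffAt (hg x hx) 0).differentiableAt (by simp)) _ 0,
        pd_const_mul ((pd_contDiffAt (hg x hx) 1).differentiableAt (by simp)) _ 1]
    ring
  -- harmonicity gives b11 ΔB = b12 ΔB = 0
  have k1 : b11 x * lap B x = 0 := by
    have h := hharm1 x hx
    rw [lap11, hu0 x hx, pdu 0] at h
    linear_combination (-1/2 : ℝ) * h
  have k2 : b12 x * lap B x = 0 := by
    have h := hharm2 x hx
    rw [lap12, hu0 x hx, pdu 0, pdu 1] at h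
    linear_combination (-1/2 : ℝ) * h
  -- Gauss with minimality
  have hg2 : b11 x ^ 2 + b12 x ^ 2 = (A x / 2) * lap g x := by
    have h := hGauss x hx
    have hb : b22 x = -b11 x := by have := hmin x hx; linarith
    rw [hb] at h
    linear_combination -h
  have k : (A x / 2) * lap g x * lap B x = 0 := by
    linear_combination b11 x * k1 + b12 x * k2 - lap B x * hg2
  have k' : A x * lap g x ^ 2 = 0 := by
    rw [lapBeq] at k
    linear_combination 4 * k
  have hL2 : lap g x ^ 2 = 0 :=
    (mul_eq_zero.mp k').resolve_left (ne_of_gt (hApos x hx))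
  have hL : lap g x = 0 := by
    exact pow_eq_zero_iff (two_ne_zero) |>.mp hL2
  rw [hL, mul_zero]
end

section
/- For the helicoid, the Laplacian of the second fundamental form satisfies (Δb)₁₂ = −2/(1+(x²)²)^{5/2}, (Δb)₁₁ = (Δb)₂₂ = 0; consequently Δb = 2Kb where K = −1/(1+(x²)²)² and b₁₂ = 1/√(1+(x²)²), b₁₁ = b₂₂ = 0. -/
open scoped BigOperators

/-- Christoffel symbols `Γᵏᵢⱼ = (1/2) gᵏˡ(∂ᵢg_{jl} + ∂ⱼg_{il} − ∂ₗg_{ij})`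
of a metric `gm` with inverse `ginv`. -/
noncomputable def christoffel (gm ginv : Fin 2 → Fin 2 → ℝ × ℝ → ℝ)
    (k i j : Fin 2) (x : ℝ × ℝ) : ℝ :=
  (1 / 2) * ∑ l : Fin 2, ginv k l x *
    (pd i (gm j l) x + pd j (gm i l) x - pd l (gm i j) x)

/-- First covariant derivative of a symmetric 2-tensor:
`∇ₗb_{jk} = ∂ₗb_{jk} − Γᵐₗⱼb_{mk} − Γᵐₗₖb_{jm}`. -/
noncomputable def cov1 (gm ginv b : Fin 2 → Fin 2 → ℝ × ℝ → ℝ)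
    (l j k : Fin 2) (x : ℝ × ℝ) : ℝ :=
  pd l (b j k) x - (∑ m : Fin 2, christoffel gm ginv m l j x * b m k x)
    - ∑ m : Fin 2, christoffel gm ginv m l k x * b j m x

/-- Second covariant derivative `∇ₖ∇ₗb_{ij}` of a symmetric 2-tensor. -/
noncomputable def cov2 (gm ginv b : Fin 2 → Fin 2 → ℝ × ℝ → ℝ)
    (k l i j : Fin 2) (x : ℝ × ℝ) : ℝ :=
  pd k (fun y => cov1 gm ginv b l i j y) x
    - (∑ m : Fin 2, christoffel gm ginv m k l x * cov1 gm ginv b m i j x)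
    - (∑ m : Fin 2, christoffel gm ginv m k i x * cov1 gm ginv b l m j x)
    - ∑ m : Fin 2, christoffel gm ginv m k j x * cov1 gm ginv b l i m x

/-- Rough Laplacian `(Δb)_{ij} = gᵏˡ∇ₖ∇ₗb_{ij}` of a symmetric 2-tensor. -/
noncomputable def lapTensor (gm ginv b : Fin 2 → Fin 2 → ℝ × ℝ → ℝ)
    (i j : Fin 2) (x : ℝ × ℝ) : ℝ :=
  ∑ k : Fin 2, ∑ l : Fin 2, ginv k l x * cov2 gm ginv b k l i j x

/-- Metric of the helicoid: `g₁₁ = 1 + (x²)²`, `g₂₂ = 1`, `g₁₂ = 0`. -/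
noncomputable def gmHel : Fin 2 → Fin 2 → ℝ × ℝ → ℝ := fun i j x =>
  if i = j then (if i = 0 then 1 + x.2 ^ 2 else 1) else 0

/-- Inverse metric of the helicoid. -/
noncomputable def ginvHel : Fin 2 → Fin 2 → ℝ × ℝ → ℝ := fun i j x =>
  if i = j then (if i = 0 then (1 + x.2 ^ 2)⁻¹ else 1) else 0

/-- Second fundamental form of the helicoid: `b₁₁ = b₂₂ = 0`,
`b₁₂ = b₂₁ = 1/√(1 + (x²)²)`. -/
noncomputable def bHel : Fin 2 → Fin 2 → ℝ × ℝ → ℝ := fun i j x =>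
  if i = j then 0 else 1 / Real.sqrt (1 + x.2 ^ 2)

/-!
Every coefficient involved (of `g`, `g⁻¹`, `b`, the Christoffel symbols and `∇b`) depends on
`t = x²` alone, so `∂₁` kills all of them and `∂₂` is a one-variable derivative. With
`s = √(1 + t²)` and indices counted from `0`, the only nonzero Christoffel symbols are
`Γ¹₀₀ = -t` and `Γ⁰₀₁ = Γ⁰₁₀ = t/s²`, and the only nonzero components of `∇b` are
`∇₀b₀₀ = 2t/s` and `∇₀b₁₁ = ∇₁b₀₁ = ∇₁b₁₀ = -2t/s³`. Contracting `∇∇b` with the diagonal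
inverse metric leaves `0` on the diagonal and `-2/s⁵` off it; every identity in between is a
rational identity in `t` and `s` modulo `s² = 1 + t²`.
-/

open Real

theorem pd_const (i : Fin 2) (c : ℝ) (x : ℝ × ℝ) : pd i (fun _ => c) x = 0 := by
  simp [pd]

theorem pd_comp_snd {f : ℝ → ℝ} {f' : ℝ} {x : ℝ × ℝ} (hf : HasDerivAt f f' x.2) (i : Fin 2) :
    pd i (fun y => f y.2) x = if i = 0 then 0 else f' := by
  have h : HasFDerivAt (fun y : ℝ × ℝ => f y.2)
      ((ContinuousLinearMap.smulRight (1 : ℝ →L[ℝ] ℝ) f').comp (ContinuousLinearMap.snd ℝ ℝ ℝ)) x :=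
    hf.hasFDerivAt.comp x hasFDerivAt_snd
  fin_cases i <;> simp [pd, h.fderiv]

theorem sqrt_pow_five (a : ℝ) : √(a ^ 5) = a ^ 2 * √a := by
  rw [show a ^ 5 = (a ^ 2) ^ 2 * a by ring, sqrt_mul (by positivity), sqrt_sq (by positivity)]

section OneAddSq

variable (t : ℝ)

theorem one_add_sq_pos : 0 < 1 + t ^ 2 := by positivity

theorem sqrt_one_add_sq_pos : 0 < √(1 + t ^ 2) := sqrt_pos.mpr (one_add_sq_pos t)

theorem sq_sqrt_one_add_sq : √(1 + t ^ 2) ^ 2 = 1 + t ^ 2 := sq_sqrt (one_add_sq_pos t).le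

theorem hasDerivAt_one_add_sq : HasDerivAt (fun u => 1 + u ^ 2) (2 * t) t := by
  simpa using (hasDerivAt_pow 2 t).const_add 1

theorem hasDerivAt_sqrt_one_add_sq : HasDerivAt (fun u => √(1 + u ^ 2)) (t / √(1 + t ^ 2)) t :=
  ((hasDerivAt_sqrt (one_add_sq_pos t).ne').comp t (hasDerivAt_one_add_sq t)).congr_deriv <| by
    field_simp

theorem hasDerivAt_inv_sqrt_one_add_sq :
    HasDerivAt (fun u => (√(1 + u ^ 2))⁻¹) (-t / ((1 + t ^ 2) * √(1 + t ^ 2))) t :=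
  ((hasDerivAt_sqrt_one_add_sq t).inv (sqrt_one_add_sq_pos t).ne').congr_deriv <| by
    have hs2 := sq_sqrt_one_add_sq t
    field_simp
    linear_combination t * hs2

theorem hasDerivAt_mul_div_sqrt_one_add_sq :
    HasDerivAt (fun u => 2 * u / √(1 + u ^ 2)) (2 / ((1 + t ^ 2) * √(1 + t ^ 2))) t :=
  (((hasDerivAt_id t).const_mul 2).div (hasDerivAt_sqrt_one_add_sq t)
    (sqrt_one_add_sq_pos t).ne').congr_deriv <| by
    simp only [id]
    have hs2 := sq_sqrt_one_add_sq t
    field_simp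
    linear_combination t ^ 2 * hs2

theorem hasDerivAt_mul_div_sqrt_one_add_sq_cube :
    HasDerivAt (fun u => -2 * u / ((1 + u ^ 2) * √(1 + u ^ 2)))
      ((4 * t ^ 2 - 2) / ((1 + t ^ 2) ^ 2 * √(1 + t ^ 2))) t :=
  (((hasDerivAt_id t).const_mul (-2)).div
    ((hasDerivAt_one_add_sq t).mul (hasDerivAt_sqrt_one_add_sq t))
    (mul_pos (one_add_sq_pos t) (sqrt_one_add_sq_pos t)).ne').congr_deriv <| by
    simp only [id, Pi.mul_apply]
    have hs2 := sq_sqrt_one_add_sq t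
    field_simp
    linear_combination -2 * t ^ 2 * hs2

end OneAddSq

theorem pd_gmHel (i a b : Fin 2) (x : ℝ × ℝ) :
    pd i (gmHel a b) x = if a = 0 ∧ b = 0 ∧ i = 1 then 2 * x.2 else 0 := by
  unfold gmHel
  fin_cases a <;> fin_cases b <;> fin_cases i <;>
    simp [pd_const, pd_comp_snd (hasDerivAt_one_add_sq x.2)]

theorem pd_bHel (i a b : Fin 2) (x : ℝ × ℝ) :
    pd i (bHel a b) x =
      if a ≠ b ∧ i = 1 then -x.2 / ((1 + x.2 ^ 2) * √(1 + x.2 ^ 2)) else 0 := by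
  unfold bHel
  fin_cases a <;> fin_cases b <;> fin_cases i <;>
    simp [pd_const, pd_comp_snd (hasDerivAt_inv_sqrt_one_add_sq x.2)]

theorem christoffel_helicoid (k i j : Fin 2) (x : ℝ × ℝ) :
    christoffel gmHel ginvHel k i j x =
      if k = 1 ∧ i = 0 ∧ j = 0 then -x.2
      else if k = 0 ∧ i ≠ j then x.2 / (1 + x.2 ^ 2)
      else 0 := by
  fin_cases k <;> fin_cases i <;> fin_cases j <;>
    simp [christoffel, pd_gmHel, ginvHel] <;> ring

-- `∇ₗb_{ab}` of the helicoid as a function of `t = x²`, and its derivative in `t`.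
noncomputable def cov1Hel (l a b : Fin 2) : ℝ → ℝ :=
  if l = 0 ∧ a = 0 ∧ b = 0 then fun t => 2 * t / √(1 + t ^ 2)
  else if l = 0 ∧ a = 1 ∧ b = 1 ∨ l = 1 ∧ a ≠ b then
    fun t => -2 * t / ((1 + t ^ 2) * √(1 + t ^ 2))
  else 0

noncomputable def dcov1Hel (l a b : Fin 2) (t : ℝ) : ℝ :=
  if l = 0 ∧ a = 0 ∧ b = 0 then 2 / ((1 + t ^ 2) * √(1 + t ^ 2))
  else if l = 0 ∧ a = 1 ∧ b = 1 ∨ l = 1 ∧ a ≠ b then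
    (4 * t ^ 2 - 2) / ((1 + t ^ 2) ^ 2 * √(1 + t ^ 2))
  else 0

theorem hasDerivAt_cov1Hel (l a b : Fin 2) (t : ℝ) :
    HasDerivAt (cov1Hel l a b) (dcov1Hel l a b t) t := by
  unfold cov1Hel dcov1Hel
  split_ifs
  · exact hasDerivAt_mul_div_sqrt_one_add_sq t
  · exact hasDerivAt_mul_div_sqrt_one_add_sq_cube t
  · exact hasDerivAt_const t 0

theorem cov1_helicoid (l a b : Fin 2) (x : ℝ × ℝ) :
    cov1 gmHel ginvHel bHel l a b x = cov1Hel l a b x.2 := by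
  fin_cases l <;> fin_cases a <;> fin_cases b <;>
    simp [cov1, cov1Hel, christoffel_helicoid, pd_bHel, bHel] <;> field_simp <;> ring

theorem pd_cov1_helicoid (k l a b : Fin 2) (x : ℝ × ℝ) :
    pd k (fun y => cov1 gmHel ginvHel bHel l a b y) x =
      if k = 0 then 0 else dcov1Hel l a b x.2 := by
  simp only [cov1_helicoid]
  exact pd_comp_snd (hasDerivAt_cov1Hel l a b x.2) k

theorem lapTensor_helicoid (i j : Fin 2) (x : ℝ × ℝ) :
    lapTensor gmHel ginvHel bHel i j x =
      if i = j then 0 else -2 / ((1 + x.2 ^ 2) ^ 2 * √(1 + x.2 ^ 2)) := by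
  simp only [lapTensor, cov2, Fin.sum_univ_two, pd_cov1_helicoid]
  fin_cases i <;> fin_cases j <;>
    simp [ginvHel, cov1_helicoid, christoffel_helicoid, cov1Hel, dcov1Hel] <;>
    field_simp <;> ring

/-- For the helicoid, `(Δb)₁₂ = −2/(1+(x²)²)^{5/2}`, `(Δb)₁₁ = (Δb)₂₂ = 0`;
consequently `Δb = 2Kb` with `K = −1/(1+(x²)²)²`. -/
theorem helicoid_delta_recurrent (x : ℝ × ℝ) :
    lapTensor gmHel ginvHel bHel 0 1 x = -2 / Real.sqrt ((1 + x.2 ^ 2) ^ 5) ∧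
    lapTensor gmHel ginvHel bHel 0 0 x = 0 ∧
    lapTensor gmHel ginvHel bHel 1 1 x = 0 ∧
    (∀ i j : Fin 2, lapTensor gmHel ginvHel bHel i j x =
      2 * (-1 / (1 + x.2 ^ 2) ^ 2) * bHel i j x) := by
  refine ⟨?_, by simp [lapTensor_helicoid], by simp [lapTensor_helicoid], fun i j => ?_⟩
  · simp [lapTensor_helicoid, sqrt_pow_five]
  · rw [lapTensor_helicoid, bHel]
    split_ifs
    · simp
    · field_simp
end
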